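/- arXiv:2108.07427 — 3 statements merged into one kernel-verified Lean document; each statement's English description precedes it below -/
import Mathlib

section
/- The following four statements are equivalent: (1) there exists a self-dual 2-quasi-FG code, i.e., an FG-submodule C of (FG)² with C = C^⊥; (2) there exists a self-dual 2-quasi-FG code of type I, i.e., an element b ∈ FG with b·b̄ = −1, so that C_{1,b} = {(u, ub) : u ∈ FG} is self-dual; (3) −1 is a square element of F; (4) either q is even, or 4 divides q − 1. -/
open scoped Classical

noncomputable section

/-- The "bar" map on the group algebra: `Σ aₓ x ↦ Σ aₓ x⁻¹`. -/
def bar {F : Type} [Field F] {G : Type} [CommGroup G] (a : MonoidAlgebra F G) :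
    MonoidAlgebra F G :=
  MonoidAlgebra.ofCoeff (Finsupp.mapDomain (fun x => x⁻¹) a.coeff)

/-- The euclidean inner product on the group algebra. -/
def inn {F : Type} [Field F] {G : Type} [CommGroup G] [Fintype G]
    (a b : MonoidAlgebra F G) : F :=
  ∑ x : G, a.coeff x * b.coeff x

/-- The euclidean inner product on `(FG)²`. -/
def inn2 {F : Type} [Field F] {G : Type} [CommGroup G] [Fintype G]
    (u v : MonoidAlgebra F G × MonoidAlgebra F G) : F :=
  inn u.1 v.1 + inn u.2 v.2

/-- The Hamming weight of an element of `(FG)²` (number of nonzero coordinates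
among its `2n` coordinates). -/
def wt {F : Type} [Field F] {G : Type} [CommGroup G] [Fintype G]
    (u : MonoidAlgebra F G × MonoidAlgebra F G) : ℕ :=
  (Finset.univ.filter fun x : G => u.1.coeff x ≠ 0).card +
    (Finset.univ.filter fun x : G => u.2.coeff x ≠ 0).card

/-- The 2-quasi-abelian code generated by `(a,b)`: `C_{a,b} = {(ua, ub) : u ∈ FG}`. -/
def code {F : Type} [Field F] {G : Type} [CommGroup G]
    (a b : MonoidAlgebra F G) :
    Submodule (MonoidAlgebra F G) (MonoidAlgebra F G × MonoidAlgebra F G) :=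
  LinearMap.range
    ((LinearMap.mulRight (MonoidAlgebra F G) a).prod
      (LinearMap.mulRight (MonoidAlgebra F G) b))

/-- The dual (orthogonal complement) of a `2`-quasi-abelian code, as a set. -/
def dualSet {F : Type} [Field F] {G : Type} [CommGroup G] [Fintype G]
    (C : Submodule (MonoidAlgebra F G) (MonoidAlgebra F G × MonoidAlgebra F G)) :
    Set (MonoidAlgebra F G × MonoidAlgebra F G) :=
  {v | ∀ c ∈ C, inn2 v c = 0}

/-- A `2`-quasi-abelian code is self-dual if it equals its orthogonal complement. -/
def IsSelfDualCode {F : Type} [Field F] {G : Type} [CommGroup G] [Fintype G]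
    (C : Submodule (MonoidAlgebra F G) (MonoidAlgebra F G × MonoidAlgebra F G)) : Prop :=
  (C : Set (MonoidAlgebra F G × MonoidAlgebra F G)) = dualSet C

/-- A `2`-quasi-abelian code is self-orthogonal if `⟨u,v⟩ = 0` for all `u, v` in it. -/
def IsSelfOrthCode {F : Type} [Field F] {G : Type} [CommGroup G] [Fintype G]
    (C : Submodule (MonoidAlgebra F G) (MonoidAlgebra F G × MonoidAlgebra F G)) : Prop :=
  ∀ u ∈ C, ∀ v ∈ C, inn2 u v = 0

/-- The minimum Hamming weight of the nonzero elements of a code. -/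
def minwt {F : Type} [Field F] {G : Type} [CommGroup G] [Fintype G]
    (C : Submodule (MonoidAlgebra F G) (MonoidAlgebra F G × MonoidAlgebra F G)) : ℕ :=
  sInf {k | ∃ v ∈ C, v ≠ 0 ∧ wt v = k}

/-- `μ_q(n)`: the minimal size of a nontrivial `q`-cyclotomic coset of `ℤ/nℤ`. -/
def mu (q n : ℕ) : ℕ :=
  sInf {k | ∃ a : ZMod n, a ≠ 0 ∧
    k = Nat.card {b : ZMod n | ∃ j : ℕ, b = a * (q : ZMod n) ^ j}}

/-- The `q`-entropy function. -/
def entropy (q : ℕ) (δ : ℝ) : ℝ :=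
  δ * Real.logb q (q - 1) - δ * Real.logb q δ - (1 - δ) * Real.logb q (1 - δ)

/-- A primitive idempotent of a commutative ring. -/
def IsPrimIdem {A : Type} [CommRing A] (e : A) : Prop :=
  IsIdempotentElem e ∧ e ≠ 0 ∧
    ¬ ∃ e' e'' : A, IsIdempotentElem e' ∧ IsIdempotentElem e'' ∧
      e' ≠ 0 ∧ e'' ≠ 0 ∧ e' * e'' = 0 ∧ e = e' + e''

/-- The principal idempotent `e₀ = n⁻¹ Σ_{x∈G} x`. -/
def eZero (F : Type) [Field F] (G : Type) [CommGroup G] [Fintype G] : MonoidAlgebra F G :=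
  ((Fintype.card G : F)⁻¹) • ∑ x : G, MonoidAlgebra.single x (1 : F)

/-- `F`-dimension of an `FG`-submodule of `(FG)²`. -/
def fdim2 (F : Type) [Field F] {G : Type} [CommGroup G]
    (C : Submodule (MonoidAlgebra F G) (MonoidAlgebra F G × MonoidAlgebra F G)) : ℕ :=
  Module.finrank F (Submodule.restrictScalars F C)

/-- `F`-dimension of an ideal of `FG`. -/
def fdim (F : Type) [Field F] {G : Type} [CommGroup G]
    (A : Ideal (MonoidAlgebra F G)) : ℕ :=
  Module.finrank F (Submodule.restrictScalars F A)

/-! Write `ε(a) = Σ aₓ` for the augmentation and `s = Σ_{x∈G} x`. Since `s·a = ε(a)·s`, one has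
`⟨s·a, b⟩ = ε(a) ε(b)`. If `C` is self-dual, then `s·v ∈ C` for every `v ∈ C`, so
`ε(v₁)² + ε(v₂)² = 0` on `C`; and `ε(v₂)` cannot vanish on all of `C`, since otherwise
`(s, 0) ∈ C^⊥ = C` would give `n² = 0` in `F`. Hence `-1 = (ε(v₁)/ε(v₂))²`. Conversely, if
`c² = -1` then `b = c·1` satisfies `b b̄ = -1`, and `C_{1,b} = {(u, cu)}` is exactly the set of
`v` with `v₁ + c v₂ = 0`, which is its orthogonal complement. The last equivalence is the
classical criterion `-1 ∈ F^{×2} ↔ q ≢ 3 (mod 4)`. -/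

open MonoidAlgebra

section CodeBasics

variable {F : Type} [Field F] {G : Type} [CommGroup G]

lemma bar_single (g : G) (r : F) : bar (single g r) = single g⁻¹ r := by
  simp [bar, MonoidAlgebra.coeff_single, Finsupp.mapDomain_single]

lemma mem_code {a b : MonoidAlgebra F G} {v : MonoidAlgebra F G × MonoidAlgebra F G} :
    v ∈ code a b ↔ ∃ u : MonoidAlgebra F G, u * a = v.1 ∧ u * b = v.2 := by
  simp [code, LinearMap.mem_range, Prod.ext_iff]

variable [Fintype G]

lemma inn_add_left (a b c : MonoidAlgebra F G) : inn (a + b) c = inn a c + inn b c := by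
  simp only [inn, MonoidAlgebra.coeff_add, Finsupp.add_apply, add_mul, Finset.sum_add_distrib]

lemma inn_smul_left (r : F) (a b : MonoidAlgebra F G) : inn (r • a) b = r * inn a b := by
  simp [inn, Finset.mul_sum, mul_assoc]

lemma inn_smul_right (r : F) (a b : MonoidAlgebra F G) : inn a (r • b) = r * inn a b := by
  simp only [inn, MonoidAlgebra.coeff_smul, Finsupp.smul_apply, smul_eq_mul, Finset.mul_sum]
  exact Finset.sum_congr rfl fun _ _ => by ring

lemma inn_single_right (a : MonoidAlgebra F G) (g : G) (r : F) :
    inn a (single g r) = a.coeff g * r := by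
  simp [inn, Finsupp.single_apply, mul_ite]

lemma eq_zero_of_forall_inn_eq_zero {a : MonoidAlgebra F G} (h : ∀ u, inn a u = 0) : a = 0 := by
  ext g
  simpa [inn_single_right] using h (single g 1)

end CodeBasics

section Augmentation

variable {F : Type} [Field F] {G : Type} [Fintype G]

def augmentation (a : MonoidAlgebra F G) : F := ∑ x : G, a.coeff x

variable (F G) in
def groupSum : MonoidAlgebra F G := ∑ x : G, single x 1

lemma coeff_groupSum (y : G) : (groupSum F G).coeff y = 1 := by
  simp [groupSum, MonoidAlgebra.coeff_sum, Finset.sum_apply', Finsupp.single_apply]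

lemma augmentation_groupSum : augmentation (groupSum F G) = Fintype.card G := by
  simp [augmentation, coeff_groupSum]

variable [CommGroup G]

lemma groupSum_mul (a : MonoidAlgebra F G) : groupSum F G * a = augmentation a • groupSum F G := by
  ext y
  rw [MonoidAlgebra.coeff_smul, Finsupp.smul_apply, coeff_groupSum, smul_eq_mul, mul_one,
    groupSum, Finset.sum_mul, MonoidAlgebra.coeff_sum, Finset.sum_apply']
  simp only [MonoidAlgebra.coeff_single_mul_apply, one_mul]
  exact Fintype.sum_equiv ((Equiv.inv G).trans (Equiv.mulRight y)) _ _ fun _ => rfl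

lemma inn_groupSum_left (a : MonoidAlgebra F G) : inn (groupSum F G) a = augmentation a := by
  simp [inn, coeff_groupSum, augmentation]

lemma inn_groupSum_mul_left (a b : MonoidAlgebra F G) :
    inn (groupSum F G * a) b = augmentation a * augmentation b := by
  rw [groupSum_mul, inn_smul_left, inn_groupSum_left]

end Augmentation

section SelfDual

variable {F : Type} [Field F] {G : Type} [CommGroup G] [Fintype G]
  {C : Submodule (MonoidAlgebra F G) (MonoidAlgebra F G × MonoidAlgebra F G)}

lemma IsSelfDualCode.isSelfOrthCode (hC : IsSelfDualCode C) : IsSelfOrthCode C :=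
  fun u hu => (show u ∈ dualSet C from hC ▸ hu)

lemma IsSelfOrthCode.augmentation_mul_add_augmentation_mul (hC : IsSelfOrthCode C)
    {v w : MonoidAlgebra F G × MonoidAlgebra F G} (hv : v ∈ C) (hw : w ∈ C) :
    augmentation v.1 * augmentation w.1 + augmentation v.2 * augmentation w.2 = 0 := by
  have h := hC _ (C.smul_mem (groupSum F G) hv) w hw
  rwa [inn2, Prod.smul_fst, Prod.smul_snd, smul_eq_mul, smul_eq_mul, inn_groupSum_mul_left,
    inn_groupSum_mul_left] at h

lemma IsSelfDualCode.exists_augmentation_snd_ne_zero (hn : (Fintype.card G : F) ≠ 0)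
    (hC : IsSelfDualCode C) : ∃ v ∈ C, augmentation v.2 ≠ 0 := by
  by_contra! hsnd
  have hfst : ∀ v ∈ C, augmentation v.1 = 0 := fun v hv => by
    simpa [hsnd v hv] using hC.isSelfOrthCode.augmentation_mul_add_augmentation_mul hv hv
  have hmem : (groupSum F G, 0) ∈ C := by
    rw [← SetLike.mem_coe, hC]
    intro w hw
    rw [inn2, inn_groupSum_left, hfst w hw]
    simp [inn]
  simpa [augmentation_groupSum, hn] using hfst _ hmem

lemma isSquare_neg_one_of_mul_self_add_mul_self_eq_zero {a b : F} (hb : b ≠ 0)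
    (h : a * a + b * b = 0) : IsSquare (-1 : F) :=
  ⟨a / b, by field_simp; linear_combination -h⟩

theorem IsSelfDualCode.isSquare_neg_one (hn : (Fintype.card G : F) ≠ 0)
    (hC : IsSelfDualCode C) : IsSquare (-1 : F) := by
  obtain ⟨v, hv, hv₂⟩ := hC.exists_augmentation_snd_ne_zero hn
  exact isSquare_neg_one_of_mul_self_add_mul_self_eq_zero hv₂
    (hC.isSelfOrthCode.augmentation_mul_add_augmentation_mul hv hv)

end SelfDual

section TypeOne

variable {F : Type} [Field F] {G : Type} [CommGroup G]

lemma mul_single_one_eq_smul (u : MonoidAlgebra F G) (c : F) : u * single 1 c = c • u := by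
  ext g
  simp [mul_comm]

lemma single_one_mul_bar_single_one {c : F} (hc : c * c = -1) :
    single (1 : G) c * bar (single 1 c) = -1 := by
  rw [bar_single, inv_one, single_mul_single, one_mul, hc, single_neg, ← one_def]

lemma mem_code_one_single_one {c : F} {v : MonoidAlgebra F G × MonoidAlgebra F G} :
    v ∈ code 1 (single 1 c) ↔ v.2 = c • v.1 := by
  simp [mem_code, mul_single_one_eq_smul, eq_comm]

variable [Fintype G]

lemma mem_dualSet_code_one_single_one {c : F} {v : MonoidAlgebra F G × MonoidAlgebra F G} :
    v ∈ dualSet (code 1 (single 1 c)) ↔ v.1 + c • v.2 = 0 := by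
  have hinn : ∀ u, inn2 v (u, c • u) = inn (v.1 + c • v.2) u := fun u => by
    rw [inn2, inn_add_left, inn_smul_left, inn_smul_right, mul_comm]
  simp only [dualSet, Set.mem_ofPred_eq, Prod.forall, mem_code_one_single_one]
  constructor
  · intro h
    exact eq_zero_of_forall_inn_eq_zero fun u => hinn u ▸ h u _ rfl
  · rintro h u _ rfl
    rw [hinn, h, inn, Finset.sum_eq_zero]
    simp

theorem isSelfDualCode_code_one_single_one {c : F} (hc : c * c = -1) :
    IsSelfDualCode (code (1 : MonoidAlgebra F G) (single 1 c)) := by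
  ext ⟨v₁, v₂⟩
  rw [SetLike.mem_coe, mem_code_one_single_one, mem_dualSet_code_one_single_one]
  dsimp only
  constructor
  · rintro rfl
    rw [smul_smul, hc, neg_one_smul, add_neg_cancel]
  · intro h
    rw [eq_neg_of_add_eq_zero_left h, smul_neg, smul_smul, hc, neg_one_smul, neg_neg]

end TypeOne

lemma natCast_ne_zero_of_coprime_card {F : Type} [Field F] [Fintype F] {n : ℕ}
    (hcop : n.Coprime (Fintype.card F)) : (n : F) ≠ 0 := by
  have := ringChar.charP F
  intro hn
  have hdvd_n : ringChar F ∣ n := (CharP.cast_eq_zero_iff F _ n).mp hn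
  have hdvd_q : ringChar F ∣ Fintype.card F :=
    (CharP.cast_eq_zero_iff F _ _).mp (FiniteField.cast_card_eq_zero F)
  exact (CharP.char_is_prime F (ringChar F)).ne_one (Nat.eq_one_of_dvd_coprimes hcop hdvd_n hdvd_q)

theorem stmt_2_general (F : Type) [Field F] [Fintype F] (G : Type) [CommGroup G] [Fintype G]
    (hcop : Nat.Coprime (Fintype.card G) (Fintype.card F)) :
    ((∃ C : Submodule (MonoidAlgebra F G) (MonoidAlgebra F G × MonoidAlgebra F G),
        IsSelfDualCode C) ↔
      (∃ b : MonoidAlgebra F G, b * bar b = -1 ∧ IsSelfDualCode (code 1 b))) ∧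
    ((∃ b : MonoidAlgebra F G, b * bar b = -1 ∧ IsSelfDualCode (code 1 b)) ↔
      IsSquare (-1 : F)) ∧
    (IsSquare (-1 : F) ↔
      (Even (Fintype.card F) ∨ 4 ∣ (Fintype.card F - 1))) := by
  have square_of_selfDual : (∃ C : Submodule (MonoidAlgebra F G) (MonoidAlgebra F G × MonoidAlgebra F G),
      IsSelfDualCode C) → IsSquare (-1 : F) :=
    fun ⟨_, hC⟩ => hC.isSquare_neg_one (natCast_ne_zero_of_coprime_card hcop)
  have typeOne_of_square : IsSquare (-1 : F) →
      ∃ b : MonoidAlgebra F G, b * bar b = -1 ∧ IsSelfDualCode (code 1 b) :=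
    fun ⟨c, hc⟩ => ⟨single 1 c, single_one_mul_bar_single_one hc.symm,
      isSelfDualCode_code_one_single_one hc.symm⟩
  refine ⟨⟨fun h => typeOne_of_square (square_of_selfDual h), fun ⟨_, _, hb⟩ => ⟨_, hb⟩⟩,
    ⟨fun ⟨_, _, hb⟩ => square_of_selfDual ⟨_, hb⟩, typeOne_of_square⟩, ?_⟩
  rw [FiniteField.isSquare_neg_one_iff, Nat.even_iff]
  omega

/-- The following are equivalent: (1) a self-dual 2-quasi-`FG` code exists;
(2) a self-dual 2-quasi-`FG` code of type I exists, i.e. there is `b ∈ FG` with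
`b·b̄ = -1` (so that `C_{1,b}` is self-dual); (3) `-1` is a square in `F`;
(4) `q` is even or `4 ∣ q - 1`. -/
theorem stmt_2 (F : Type) [Field F] [Fintype F] (G : Type) [CommGroup G] [Fintype G]
    (hn : 1 < Fintype.card G) (hodd : Odd (Fintype.card G))
    (hcop : Nat.Coprime (Fintype.card G) (Fintype.card F)) :
    ((∃ C : Submodule (MonoidAlgebra F G) (MonoidAlgebra F G × MonoidAlgebra F G),
        IsSelfDualCode C) ↔
      (∃ b : MonoidAlgebra F G, b * bar b = -1 ∧ IsSelfDualCode (code 1 b))) ∧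
    ((∃ b : MonoidAlgebra F G, b * bar b = -1 ∧ IsSelfDualCode (code 1 b)) ↔
      IsSquare (-1 : F)) ∧
    (IsSquare (-1 : F) ↔
      (Even (Fintype.card F) ∨ 4 ∣ (Fintype.card F - 1))) :=
  stmt_2_general F G hcop

end
end

section
/- Let e be a primitive idempotent of FG with ē = e and e ≠ e_0, where e_0 = n^{-1}Σ_{x∈G} x. Then dim_F FGe is even, and the fixed-point set (FGe)^♭ = {a ∈ FGe : ā = a} satisfies dim_F (FGe)^♭ = (1/2)·dim_F FGe; equivalently, the bar map restricts to a nontrivial field automorphism of the finite field FGe of order 2. -/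
open scoped Classical

noncomputable section

/-!
Since `n` is invertible in `F`, `FG` is semisimple, so for the primitive idempotent `e` the
quotient `K = FG ⧸ (1 - e)` is a field; `[a] ↦ a e` identifies it `F`-linearly with `FGe`.
As `ē = e`, the bar map induces an involution `σ` of `K` matching bar on `FGe`. If `σ` were
trivial, then `x e = x⁻¹ e` for all `x ∈ G`; every element of a group of odd order is a square,
so `x e = e` for all `x`, which forces `e = e₀`. Hence `σ` has order 2, and by Artin's theorem
`[K : K^σ] = 2`, while `K^σ` corresponds to the bar-fixed part of `FGe`.
-/

section Idempotent

variable {R : Type} [CommRing R] {e : R}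

theorem IsIdempotentElem.mem_span_one_sub_iff (he : IsIdempotentElem e) {a : R} :
    a ∈ Ideal.span {1 - e} ↔ a * e = 0 := by
  refine ⟨fun ha => ?_, fun ha => Ideal.mem_span_singleton'.mpr ⟨a, ?_⟩⟩
  · obtain ⟨r, rfl⟩ := Ideal.mem_span_singleton'.mp ha
    rw [mul_assoc, he.one_sub_mul_self, mul_zero]
  · rw [mul_sub, mul_one, ha, sub_zero]

theorem IsIdempotentElem.mk_mul_self (he : IsIdempotentElem e) (a : R) :
    Ideal.Quotient.mk (Ideal.span {1 - e}) (a * e) = Ideal.Quotient.mk _ a := by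
  rw [Ideal.Quotient.eq, he.mem_span_one_sub_iff, sub_mul, mul_assoc, he.eq, sub_self]

theorem IsPrimIdem.eq_zero_or_one_of_isIdempotentElem_quotient (he : IsPrimIdem e)
    {x : R ⧸ Ideal.span {1 - e}} (hx : IsIdempotentElem x) : x = 0 ∨ x = 1 := by
  obtain ⟨a, rfl⟩ := Ideal.Quotient.mk_surjective x
  have hae : IsIdempotentElem (a * e) := by
    have : (a * a - a) * e = 0 := by
      rw [← he.1.mem_span_one_sub_iff, ← Ideal.Quotient.eq, map_mul]
      exact hx
    calc a * e * (a * e) = a * a * e * e := by ring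
      _ = a * e := by rw [mul_assoc, he.1.eq, ← sub_eq_zero, ← sub_mul, this]
  have hae_e : a * e * e = a * e := by rw [mul_assoc, he.1.eq]
  have hsplit : a * e * (e - a * e) = 0 := by rw [mul_sub, hae_e, hae.eq, sub_self]
  by_contra! hx01
  refine he.2.2 ⟨a * e, e - a * e, hae, hae.sub he.1 hae_e (by rw [mul_comm, hae_e]),
    fun h => hx01.1 ?_, fun h => hx01.2 ?_, hsplit, by ring⟩
  · rw [← he.1.mk_mul_self, h, map_zero]
  · rw [← he.1.mk_mul_self, ← sub_eq_zero.mp h, ← map_one (Ideal.Quotient.mk _),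
      ← he.1.mk_mul_self 1, one_mul]

theorem IsPrimIdem.isField_quotient [IsSemisimpleRing R] (he : IsPrimIdem e) :
    IsField (R ⧸ Ideal.span {1 - e}) := by
  have : Nontrivial (R ⧸ Ideal.span {1 - e}) := by
    refine Ideal.Quotient.nontrivial_iff.mpr fun htop => he.2.1 ?_
    simpa using he.1.mem_span_one_sub_iff.mp (htop ▸ Submodule.mem_top : (1 : R) ∈ _)
  have : IsSemisimpleRing (R ⧸ Ideal.span {1 - e}) :=
    (Ideal.Quotient.mk _).isSemisimpleRing_of_surjective Ideal.Quotient.mk_surjective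
  refine Ring.isField_iff_isSimpleOrder_ideal.mpr { eq_bot_or_eq_top := fun J => ?_ }
  obtain ⟨f, hf, rfl⟩ := IsSemisimpleRing.ideal_eq_span_idempotent J
  rcases he.eq_zero_or_one_of_isIdempotentElem_quotient hf with rfl | rfl
  · exact Or.inl (Ideal.span_singleton_eq_bot.mpr rfl)
  · exact Or.inr Ideal.span_singleton_one

end Idempotent

section QuotientMulRight

variable {R : Type} [CommRing R] {e : R} (F : Type*) [CommRing F] [Algebra F R]

def IsIdempotentElem.quotientMulRight (he : IsIdempotentElem e) :
    (R ⧸ Ideal.span {1 - e}) →ₗ[F] R :=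
  ((Ideal.span {1 - e}).liftQ (LinearMap.mulRight R e)
    fun _ ha => he.mem_span_one_sub_iff.mp ha).restrictScalars F

variable {F}

theorem IsIdempotentElem.quotientMulRight_mk (he : IsIdempotentElem e) (a : R) :
    he.quotientMulRight F (Ideal.Quotient.mk _ a) = a * e :=
  rfl

theorem IsIdempotentElem.quotientMulRight_injective (he : IsIdempotentElem e) :
    Function.Injective (he.quotientMulRight F) := by
  intro x y hxy
  obtain ⟨a, rfl⟩ := Ideal.Quotient.mk_surjective x
  obtain ⟨b, rfl⟩ := Ideal.Quotient.mk_surjective y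
  rw [he.quotientMulRight_mk, he.quotientMulRight_mk] at hxy
  rw [Ideal.Quotient.eq, he.mem_span_one_sub_iff, sub_mul, hxy, sub_self]

theorem IsIdempotentElem.range_quotientMulRight (he : IsIdempotentElem e) :
    LinearMap.range (he.quotientMulRight F) = (Ideal.span {e}).restrictScalars F := by
  ext a
  simp only [LinearMap.mem_range, Submodule.restrictScalars_mem, Ideal.mem_span_singleton']
  constructor
  · rintro ⟨x, rfl⟩
    obtain ⟨b, rfl⟩ := Ideal.Quotient.mk_surjective x
    exact ⟨b, rfl⟩
  · rintro ⟨b, rfl⟩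
    exact ⟨Ideal.Quotient.mk _ b, rfl⟩

end QuotientMulRight

theorem LinearMap.map_eqLocus_id_of_comp_eq {R M N : Type*} [Semiring R] [AddCommMonoid M]
    [AddCommMonoid N] [Module R M] [Module R N] {ψ : M →ₗ[R] N} (hψ : Function.Injective ψ)
    {σ : M →ₗ[R] M} {τ : N →ₗ[R] N} (h : ψ ∘ₗ σ = τ ∘ₗ ψ) :
    (eqLocus σ id).map ψ = range ψ ⊓ eqLocus τ id := by
  ext v
  simp only [Submodule.mem_map, mem_eqLocus, id_apply, Submodule.mem_inf, mem_range]
  constructor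
  · rintro ⟨w, hw, rfl⟩
    exact ⟨⟨w, rfl⟩, by rw [← comp_apply, ← h, comp_apply, hw]⟩
  · rintro ⟨⟨w, rfl⟩, hv⟩
    exact ⟨w, hψ (by rw [← comp_apply, h, comp_apply, hv]), rfl⟩

theorem AlgEquiv.finrank_eq_two_mul_finrank_eqLocus {F K : Type*} [Field F] [Field K]
    [Algebra F K] [FiniteDimensional F K] {σ : K ≃ₐ[F] K} (hσ2 : σ ^ 2 = 1) (hσ : σ ≠ 1) :
    Module.finrank F K = 2 * Module.finrank F (LinearMap.eqLocus σ.toLinearMap .id) := by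
  set L := IntermediateField.fixedField (Subgroup.zpowers σ) with hL_def
  have hL : Subalgebra.toSubmodule L.toSubalgebra = LinearMap.eqLocus σ.toLinearMap .id := by
    ext x
    simp only [Subalgebra.mem_toSubmodule, IntermediateField.mem_toSubalgebra, hL_def,
      IntermediateField.mem_fixedField_iff, LinearMap.mem_eqLocus, AlgEquiv.toLinearMap_apply,
      LinearMap.id_apply]
    exact Subgroup.zpowers_le (H := MulAction.stabilizer (K ≃ₐ[F] K) x)
  have hLK : Module.finrank L K = 2 := by
    rw [IntermediateField.finrank_fixedField_eq_card, Nat.card_zpowers,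
      orderOf_eq_prime hσ2 hσ]
  rw [← Module.finrank_mul_finrank F L K, hLK,
    ← IntermediateField.finrank_eq_finrank_subalgebra, ← Subalgebra.finrank_toSubmodule, hL,
    mul_comm]

section GroupAlgebra

variable {F : Type} [Field F] {G : Type} [CommGroup G]

variable (F G) in
def barAlgEquiv : MonoidAlgebra F G ≃ₐ[F] MonoidAlgebra F G :=
  MonoidAlgebra.domCongr F F (MulEquiv.inv G)

theorem coe_barAlgEquiv : ⇑(barAlgEquiv F G) = bar := by
  funext a
  induction a using MonoidAlgebra.induction_linear with
  | zero => simp [bar]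
  | add f g hf hg =>
      simp only [map_add, hf, hg, bar, MonoidAlgebra.coeff_add, Finsupp.mapDomain_add,
        MonoidAlgebra.ofCoeff_add]
  | single x c =>
      rw [barAlgEquiv, MonoidAlgebra.domCongr_single, bar, MonoidAlgebra.coeff_single,
        Finsupp.mapDomain_single, MonoidAlgebra.ofCoeff_single]
      rfl

theorem bar_bar (a : MonoidAlgebra F G) : bar (bar a) = a := by
  rw [← coe_barAlgEquiv]
  exact (barAlgEquiv F G).symm_apply_apply a

theorem MonoidAlgebra.single_one_mul_eZero [Fintype G] (x : G) :
    MonoidAlgebra.single x (1 : F) * eZero F G = eZero F G := by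
  rw [eZero, mul_smul_comm, Finset.mul_sum]
  simp_rw [MonoidAlgebra.single_mul_single, one_mul]
  congr 1
  exact Fintype.sum_equiv (Equiv.mulLeft x) _ _ fun _ => rfl

theorem MonoidAlgebra.mul_eZero [Fintype G] (a : MonoidAlgebra F G) :
    a * eZero F G = MonoidAlgebra.lift F F G 1 a • eZero F G := by
  induction a using MonoidAlgebra.induction_linear with
  | zero => simp
  | add a b ha hb => rw [add_mul, ha, hb, map_add, add_smul]
  | single x c =>
      rw [← mul_one c, ← MonoidAlgebra.smul_single', smul_mul_assoc, single_one_mul_eZero,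
        map_smul, MonoidAlgebra.lift_single, smul_eq_mul, MonoidHom.one_apply, one_smul, mul_one]

theorem MonoidAlgebra.eZero_mul_of_forall_single_mul_eq [Fintype G]
    (hn : (Fintype.card G : F) ≠ 0) {a : MonoidAlgebra F G}
    (h : ∀ x : G, MonoidAlgebra.single x (1 : F) * a = a) : eZero F G * a = a := by
  rw [eZero, smul_mul_assoc, Finset.sum_mul, Finset.sum_congr rfl fun x _ => h x,
    Finset.sum_const, Finset.card_univ, ← Nat.cast_smul_eq_nsmul F, smul_smul,
    inv_mul_cancel₀ hn, one_smul]

theorem IsIdempotentElem.eq_eZero_of_forall_single_mul_eq [Fintype G]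
    (hn : (Fintype.card G : F) ≠ 0) {e : MonoidAlgebra F G} (he : IsIdempotentElem e)
    (he0 : e ≠ 0) (h : ∀ x : G, MonoidAlgebra.single x (1 : F) * e = e) : e = eZero F G := by
  have hε : IsIdempotentElem (MonoidAlgebra.lift F F G 1 e) := he.map _
  have he_eq : e = MonoidAlgebra.lift F F G 1 e • eZero F G := by
    rw [← MonoidAlgebra.mul_eZero, mul_comm, MonoidAlgebra.eZero_mul_of_forall_single_mul_eq hn h]
  rcases IsIdempotentElem.iff_eq_zero_or_one.mp hε with h0 | h1
  · rw [h0, zero_smul] at he_eq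
    exact absurd he_eq he0
  · rwa [h1, one_smul] at he_eq

theorem isSquare_of_odd_card {M : Type*} [Group M] [Fintype M] (hodd : Odd (Fintype.card M))
    (y : M) : IsSquare y := by
  obtain ⟨m, hm⟩ := hodd
  refine ⟨y ^ (m + 1), ?_⟩
  rw [← pow_add, show m + 1 + (m + 1) = Fintype.card M + 1 by omega, pow_succ, pow_card_eq_one,
    one_mul]

theorem MonoidAlgebra.forall_single_mul_eq_of_odd [Fintype G] (hodd : Odd (Fintype.card G))
    {a : MonoidAlgebra F G}
    (h : ∀ x : G, MonoidAlgebra.single x (1 : F) * a = MonoidAlgebra.single x⁻¹ 1 * a)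
    (y : G) : MonoidAlgebra.single y (1 : F) * a = a := by
  obtain ⟨x, rfl⟩ := isSquare_of_odd_card hodd y
  rw [← one_mul (1 : F), ← MonoidAlgebra.single_mul_single, mul_assoc, h, ← mul_assoc,
    MonoidAlgebra.single_mul_single, mul_inv_cancel, one_mul, ← MonoidAlgebra.one_def, one_mul]

end GroupAlgebra

theorem Nat.Coprime.cast_card_ne_zero {K : Type*} [Field K] [Fintype K] {n : ℕ}
    (h : n.Coprime (Fintype.card K)) : (n : K) ≠ 0 := by
  have hunit := (Nat.isCoprime_iff_coprime.mpr h).intCast (R := K)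
  push_cast at hunit
  rw [FiniteField.cast_card_eq_zero, isCoprime_zero_right] at hunit
  exact hunit.ne_zero

section QuotientBar

variable {F : Type} [Field F] {G : Type} [CommGroup G] {e : MonoidAlgebra F G}

def quotientBar (hbar : bar e = e) :
    (MonoidAlgebra F G ⧸ Ideal.span {1 - e}) ≃ₐ[F] MonoidAlgebra F G ⧸ Ideal.span {1 - e} :=
  Ideal.quotientEquivAlg _ _ (barAlgEquiv F G) <| by
    rw [Ideal.map_span, Set.image_singleton]
    change _ = Ideal.span {barAlgEquiv F G (1 - e)}
    rw [map_sub, map_one, coe_barAlgEquiv, hbar]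

theorem quotientBar_mk (hbar : bar e = e) (a : MonoidAlgebra F G) :
    quotientBar hbar (Ideal.Quotient.mk _ a) = Ideal.Quotient.mk _ (bar a) := by
  rw [← coe_barAlgEquiv]
  rfl

theorem quotientBar_sq (hbar : bar e = e) : quotientBar hbar ^ 2 = 1 := by
  ext x
  obtain ⟨a, rfl⟩ := Ideal.Quotient.mk_surjective x
  rw [pow_two, AlgEquiv.mul_apply, quotientBar_mk, quotientBar_mk, bar_bar, AlgEquiv.one_apply]

theorem quotientBar_ne_one [Fintype G] (hodd : Odd (Fintype.card G))
    (hn : (Fintype.card G : F) ≠ 0) (he : IsPrimIdem e) (hbar : bar e = e)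
    (hne : e ≠ eZero F G) : quotientBar hbar ≠ 1 := by
  intro hσ
  refine hne (he.1.eq_eZero_of_forall_single_mul_eq hn he.2.1 ?_)
  refine MonoidAlgebra.forall_single_mul_eq_of_odd hodd fun x => ?_
  have hx := quotientBar_mk hbar (MonoidAlgebra.single x (1 : F))
  rw [hσ, AlgEquiv.one_apply, ← coe_barAlgEquiv, barAlgEquiv, MonoidAlgebra.domCongr_single,
    Ideal.Quotient.eq, he.1.mem_span_one_sub_iff, sub_mul, sub_eq_zero] at hx
  exact hx

theorem quotientMulRight_comp_quotientBar (he : IsIdempotentElem e) (hbar : bar e = e) :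
    he.quotientMulRight F ∘ₗ (quotientBar hbar).toLinearMap =
      (barAlgEquiv F G).toLinearMap ∘ₗ he.quotientMulRight F := by
  refine LinearMap.ext fun x => ?_
  obtain ⟨a, rfl⟩ := Ideal.Quotient.mk_surjective x
  simp only [LinearMap.comp_apply, AlgEquiv.toLinearMap_apply, quotientBar_mk,
    he.quotientMulRight_mk, map_mul, coe_barAlgEquiv, hbar]

end QuotientBar

theorem stmt_11_general (F : Type) [Field F] [Fintype F] (G : Type) [CommGroup G] [Fintype G]
    (hodd : Odd (Fintype.card G))
    (hcop : Nat.Coprime (Fintype.card G) (Fintype.card F))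
    (e : MonoidAlgebra F G) (he : IsPrimIdem e) (hbar : bar e = e)
    (hne : e ≠ eZero F G) :
    Even (fdim F (Ideal.span {e})) ∧
    ∃ S : Submodule F (MonoidAlgebra F G),
      (S : Set (MonoidAlgebra F G)) =
        {a : MonoidAlgebra F G |
          a ∈ Ideal.span ({e} : Set (MonoidAlgebra F G)) ∧ bar a = a} ∧
      2 * Module.finrank F S = fdim F (Ideal.span {e}) := by
  have hn : (Fintype.card G : F) ≠ 0 := hcop.cast_card_ne_zero
  have : NeZero (Nat.card G : F) := ⟨by rwa [Nat.card_eq_fintype_card]⟩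
  let : Field (MonoidAlgebra F G ⧸ Ideal.span {1 - e}) := he.isField_quotient.toField
  set ψ := he.1.quotientMulRight F
  have hψ : Function.Injective ψ := he.1.quotientMulRight_injective
  have hS := LinearMap.map_eqLocus_id_of_comp_eq hψ (quotientMulRight_comp_quotientBar he.1 hbar)
  have hdim : fdim F (Ideal.span {e}) =
      2 * Module.finrank F ((LinearMap.eqLocus (quotientBar hbar).toLinearMap .id).map ψ) := by
    rw [fdim, ← he.1.range_quotientMulRight, LinearMap.finrank_range_of_inj hψ,
      AlgEquiv.finrank_eq_two_mul_finrank_eqLocus (quotientBar_sq hbar)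
        (quotientBar_ne_one hodd hn he hbar hne),
      (Submodule.equivMapOfInjective ψ hψ _).finrank_eq]
  refine ⟨⟨_, hdim.trans (two_mul _)⟩, _, ?_, hdim.symm⟩
  rw [hS, he.1.range_quotientMulRight]
  ext a
  simp [coe_barAlgEquiv]

/-- For a primitive idempotent `e` with `ē = e` and `e ≠ e₀`: `dim_F FGe` is even
and the fixed-point set `(FGe)^♭` has `F`-dimension `(1/2)·dim_F FGe`. -/
theorem stmt_11 (F : Type) [Field F] [Fintype F] (G : Type) [CommGroup G] [Fintype G]
    (hn : 1 < Fintype.card G) (hodd : Odd (Fintype.card G))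
    (hcop : Nat.Coprime (Fintype.card G) (Fintype.card F))
    (e : MonoidAlgebra F G) (he : IsPrimIdem e) (hbar : bar e = e)
    (hne : e ≠ eZero F G) :
    Even (fdim F (Ideal.span {e})) ∧
    ∃ S : Submodule F (MonoidAlgebra F G),
      (S : Set (MonoidAlgebra F G)) =
        {a : MonoidAlgebra F G |
          a ∈ Ideal.span ({e} : Set (MonoidAlgebra F G)) ∧ bar a = a} ∧
      2 * Module.finrank F S = fdim F (Ideal.span {e}) :=
  stmt_11_general F G hodd hcop e he hbar hne

end
end

section
/- Let q ≥ 2 be an integer, let m ≥ 1, and let k_1, …, k_m be integers with k_i ≥ log_q(m) (equivalently q^{k_i} ≥ m) for each i = 1, …, m. Then (q^{k_1} + 1)(q^{k_2} + 1)⋯(q^{k_m} + 1) ≤ q^{k_1 + k_2 + ⋯ + k_m + 2}. -/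
/-! Since `qᵏⁱ ≥ m`, each factor is `qᵏⁱ + 1 = qᵏⁱ (1 + q⁻ᵏⁱ) ≤ qᵏⁱ exp (1/m)`, so the product is at
most `e · q^(k₁ + ⋯ + k_m) ≤ q² · q^(k₁ + ⋯ + k_m)`. -/

open Finset Real

theorem Real.prod_add_one_le_exp_sum_inv_mul_prod {ι : Type*} (s : Finset ι) {a : ι → ℝ}
    (ha : ∀ i, 0 < a i) : ∏ i ∈ s, (a i + 1) ≤ exp (∑ i ∈ s, (a i)⁻¹) * ∏ i ∈ s, a i := by
  have hfactor : ∀ i ∈ s, a i + 1 = a i * (1 + (a i)⁻¹) := fun i _ => by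
    field_simp [(ha i).ne']
  rw [prod_congr rfl hfactor, prod_mul_distrib, mul_comm]
  exact mul_le_mul_of_nonneg_right (prod_one_add_le_exp_sum s fun i => (inv_pos.2 (ha i)).le)
    (prod_nonneg fun i _ => (ha i).le)

theorem Finset.sum_inv_le_one_of_card_le {ι : Type*} (s : Finset ι) {a : ι → ℝ}
    (ha : ∀ i ∈ s, (#s : ℝ) ≤ a i) : ∑ i ∈ s, (a i)⁻¹ ≤ 1 := by
  rcases s.eq_empty_or_nonempty with rfl | hs
  · simp
  have hcard : (0 : ℝ) < #s := by exact_mod_cast hs.card_pos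
  calc ∑ i ∈ s, (a i)⁻¹ ≤ #s • (#s : ℝ)⁻¹ :=
        sum_le_card_nsmul s _ _ fun i hi => inv_anti₀ hcard (ha i hi)
    _ = 1 := by rw [nsmul_eq_mul, mul_inv_cancel₀ hcard.ne']

theorem Real.prod_add_one_le_exp_one_mul_prod {ι : Type*} (s : Finset ι) {a : ι → ℝ}
    (ha₀ : ∀ i, 0 < a i) (ha : ∀ i ∈ s, (#s : ℝ) ≤ a i) :
    ∏ i ∈ s, (a i + 1) ≤ exp 1 * ∏ i ∈ s, a i :=
  (prod_add_one_le_exp_sum_inv_mul_prod s ha₀).trans <|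
    mul_le_mul_of_nonneg_right (exp_le_exp.2 (sum_inv_le_one_of_card_le s ha))
      (prod_nonneg fun i _ => (ha₀ i).le)

theorem stmt_17_general (q m : ℕ) (hq : 2 ≤ q) (k : Fin m → ℕ)
    (hk : ∀ i, m ≤ q ^ (k i)) :
    ∏ i, (q ^ (k i) + 1) ≤ q ^ (∑ i, k i + 2) := by
  have hq' : (2 : ℝ) ≤ q := by exact_mod_cast hq
  have he : exp 1 ≤ (q : ℝ) ^ 2 := by nlinarith [exp_one_lt_three]
  have hprod : ∏ i, ((q : ℝ) ^ k i + 1) ≤ exp 1 * ∏ i, (q : ℝ) ^ k i :=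
    prod_add_one_le_exp_one_mul_prod univ (fun i => by positivity)
      fun i _ => by simpa using (Nat.cast_le (α := ℝ)).2 (hk i)
  rw [← Nat.cast_le (α := ℝ)]
  push_cast
  calc ∏ i, ((q : ℝ) ^ k i + 1) ≤ exp 1 * (q : ℝ) ^ ∑ i, k i := by
        rwa [prod_pow_eq_pow_sum] at hprod
    _ ≤ (q : ℝ) ^ 2 * (q : ℝ) ^ ∑ i, k i := by gcongr
    _ = (q : ℝ) ^ (∑ i, k i + 2) := by rw [pow_add, mul_comm]

/-- Let `q ≥ 2`, `m ≥ 1`, and `k₁, …, k_m` be integers with `q^{kᵢ} ≥ m` for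
each `i`. Then `(q^{k₁}+1)⋯(q^{k_m}+1) ≤ q^{k₁+⋯+k_m+2}`. -/
theorem stmt_17 (q m : ℕ) (hq : 2 ≤ q) (hm : 1 ≤ m) (k : Fin m → ℕ)
    (hk : ∀ i, m ≤ q ^ (k i)) :
    ∏ i, (q ^ (k i) + 1) ≤ q ^ (∑ i, k i + 2) :=
  stmt_17_general q m hq k hk
end
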